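/- arXiv:1106.1098 — 3 statements merged into one kernel-verified Lean document; each statement's English description precedes it below -/
import Mathlib

section
/- If G is a finitely presented group, i.e. G ≅ F/R with F a finitely generated free group and R the normal closure of a finite set, then the group (R ∩ [F,F])/[R,F] (the Schur multiplier via the Hopf formula) is a finitely generated abelian group. -/
/-!
In `Q = F/[R,F]` the image of `R` is central, so it is the subgroup generated by the (finitely
many) images of the relators. Being abelian and finitely generated, it is a Noetherian
`ℤ`-module, hence its subgroup `(R ∩ [F,F])/[R,F]` is finitely generated as well.
-/

namespace Subgroup

theorem fg_of_commGroup_fg {A : Type*} [CommGroup A] [Group.FG A] (K : Subgroup A) : K.FG := by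
  have : Module.Finite ℤ (Additive A) :=
    Module.Finite.iff_addGroup_fg.2 (GroupFG.iff_add_fg.1 ‹_›)
  have hK : (AddSubgroup.toIntSubmodule K.toAddSubgroup).FG := IsNoetherian.noetherian _
  rwa [Submodule.fg_iff_addSubgroup_fg, AddSubgroup.toIntSubmodule_toAddSubgroup,
    ← fg_iff_add_fg] at hK

variable {G : Type*} [Group G]

open scoped IsMulCommutative in
theorem fg_of_le_of_isMulCommutative {H K : Subgroup G} [IsMulCommutative H] (hKH : K ≤ H)
    (hH : H.FG) : Group.FG K := by
  have : Group.FG H := (Group.fg_iff_subgroup_fg H).2 hH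
  have : Group.FG (K.subgroupOf H) := (Group.fg_iff_subgroup_fg _).2 (fg_of_commGroup_fg _)
  exact Group.fg_of_surjective (f := (subgroupOfEquivOfLe hKH).toMonoidHom)
    (subgroupOfEquivOfLe hKH).surjective

theorem map_mk'_commutator_top_le_center (N : Subgroup G) [N.Normal] :
    N.map (QuotientGroup.mk' ⁅N, (⊤ : Subgroup G)⁆) ≤ center (G ⧸ ⁅N, (⊤ : Subgroup G)⁆) := by
  rw [← centralizer_univ, ← coe_top, ← commutator_eq_bot_iff_le_centralizer,
    ← map_top_of_surjective _ (QuotientGroup.mk'_surjective _), ← map_commutator,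
    QuotientGroup.map_mk'_self]

theorem isMulCommutative_of_le_center {H : Subgroup G} (hH : H ≤ center G) :
    IsMulCommutative H :=
  .of_setLike_mul_comm fun _ ha b _ => (mem_center_iff.1 (hH ha) b).symm

theorem normal_of_le_center {H : Subgroup G} (hH : H ≤ center G) : H.Normal :=
  ⟨fun n hn g => by rwa [mem_center_iff.1 (hH hn) g, mul_inv_cancel_right]⟩

theorem normalClosure_eq_closure_of_subset_center {s : Set G} (hs : s ⊆ center G) :
    normalClosure s = closure s :=
  have : (closure s).Normal := normal_of_le_center ((closure_le _).2 hs)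
  le_antisymm (normalClosure_le_normal subset_closure) closure_le_normalClosure

end Subgroup

/-- If `G ≅ F/R` is finitely presented (`F` a finitely generated free group, `R` the
normal closure of a finite set), then the Hopf-formula Schur multiplier
`(R ∩ [F,F])/[R,F]` is a finitely generated abelian group. -/
theorem schur_stmt2 (n : ℕ) (S : Finset (FreeGroup (Fin n)))
    (R : Subgroup (FreeGroup (Fin n))) [R.Normal]
    (hR : R = Subgroup.normalClosure (S : Set (FreeGroup (Fin n)))) :
    Group.FG ↥((R ⊓ commutator (FreeGroup (Fin n))).map
        (QuotientGroup.mk' ⁅R, (⊤ : Subgroup (FreeGroup (Fin n)))⁆)) ∧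
      ∀ a b : ↥((R ⊓ commutator (FreeGroup (Fin n))).map
          (QuotientGroup.mk' ⁅R, (⊤ : Subgroup (FreeGroup (Fin n)))⁆)),
        a * b = b * a := by
  set π := QuotientGroup.mk' ⁅R, (⊤ : Subgroup (FreeGroup (Fin n)))⁆
  have hcentral : R.map π ≤ Subgroup.center _ := R.map_mk'_commutator_top_le_center
  have hgen : R.map π = Subgroup.closure (π '' S) := by
    rw [← Subgroup.normalClosure_eq_closure_of_subset_center, ← Subgroup.map_normalClosure _ _
      (QuotientGroup.mk'_surjective _), ← hR]
    rintro _ ⟨s, hs, rfl⟩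
    exact hcentral (Subgroup.mem_map_of_mem π (hR ▸ Subgroup.subset_normalClosure hs))
  have hfg : (R.map π).FG := (Subgroup.fg_iff _).2 ⟨_, hgen.symm, S.finite_toSet.image _⟩
  have hle : (R ⊓ commutator _).map π ≤ R.map π := Subgroup.map_mono inf_le_left
  have := Subgroup.isMulCommutative_of_le_center hcentral
  have := Subgroup.isMulCommutative_of_le_center (hle.trans hcentral)
  exact ⟨Subgroup.fg_of_le_of_isMulCommutative hle hfg, mul_comm'⟩
end

section
/- With φ_c : (R ∩ F')/[R,F] → (Rγ_cF ∩ F')/[Rγ_cF,F] as above, the kernel of φ_c equals ((R ∩ [R,F]γ_{c+1}F))/[R,F], i.e., the image of (R ∩ γ_{c+1}F)[R,F]/[R,F]. -/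
/-!
Since `γ_{c+1}F = [γ_cF, F]` and the commutator with `F` distributes over a product of normal
subgroups, `[Rγ_cF, F] = [R,F]γ_{c+1}F`. A map of quotients induced by inclusion kills exactly
the classes of the elements lying in the target's denominator, so `ker φ_c` consists of the
classes of `g ∈ R ∩ F'` with `g ∈ [R,F]γ_{c+1}F`.
-/

open scoped commutatorElement Pointwise

namespace Subgroup

variable {G : Type*} [Group G]

theorem commutator_sup_left (H K L : Subgroup G) [K.Normal] [L.Normal] :
    ⁅H ⊔ K, L⁆ = ⁅H, L⁆ ⊔ ⁅K, L⁆ := by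
  refine le_antisymm ?_ (sup_le (commutator_mono le_sup_left le_rfl)
    (commutator_mono le_sup_right le_rfl))
  rw [commutator_le]
  intro g hg t ht
  obtain ⟨h, hh, k, hk, rfl⟩ : g ∈ (H : Set G) * (K : Set G) := by rw [← mul_normal]; exact hg
  have hexpand : ⁅h * k, t⁆ = h * ⁅k, t⁆ * h⁻¹ * ⁅h, t⁆ := by
    simp only [commutatorElement_def]; group
  rw [hexpand]
  exact mul_mem (mem_sup_right ((commutator_normal K L).conj_mem _
    (commutator_mem_commutator hk ht) h)) (mem_sup_left (commutator_mem_commutator hh ht))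

theorem commutator_sup_lowerCentralSeries_top (R : Subgroup G) [R.Normal] (c : ℕ) :
    ⁅R ⊔ (⊤ : Subgroup G).lowerCentralSeries c, ⊤⁆ =
      ⁅R, ⊤⁆ ⊔ (⊤ : Subgroup G).lowerCentralSeries (c + 1) :=
  commutator_sup_left R _ ⊤

theorem ker_eq_map_subgroupOf_of_inclusion {A B N M : Subgroup G}
    [(N.subgroupOf A).Normal] [(M.subgroupOf B).Normal] (hAB : A ≤ B)
    (φ : A ⧸ N.subgroupOf A →* B ⧸ M.subgroupOf B)
    (hφ : ∀ (g : G) (hA : g ∈ A) (hB : g ∈ B),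
      φ (QuotientGroup.mk ⟨g, hA⟩) = QuotientGroup.mk ⟨g, hB⟩) :
    φ.ker = (M.subgroupOf A).map (QuotientGroup.mk' (N.subgroupOf A)) := by
  have hker (g : G) (hA : g ∈ A) : QuotientGroup.mk ⟨g, hA⟩ ∈ φ.ker ↔ g ∈ M := by
    rw [MonoidHom.mem_ker, hφ g hA (hAB hA), QuotientGroup.eq_one_iff, mem_subgroupOf]
  ext x
  constructor
  · induction x using QuotientGroup.induction_on with
    | H a => exact fun hx ↦ ⟨a, (hker a a.2).mp hx, rfl⟩
  · rintro ⟨a, haM, rfl⟩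
    exact (hker a a.2).mpr haM

end Subgroup

/-- The kernel of `φ_c : (R ∩ F')/[R,F] → (Rγ_cF ∩ F')/[Rγ_cF,F]` equals
`(R ∩ [R,F]γ_{c+1}F)/[R,F]`. -/
theorem schur_stmt12 (F : Type) [Group F] (R : Subgroup F) [R.Normal] (c : ℕ)
    (φ : (↥(R ⊓ commutator F) ⧸
            ((⁅R, (⊤ : Subgroup F)⁆).subgroupOf (R ⊓ commutator F))) →*
          (↥((R ⊔ (⊤ : Subgroup F).lowerCentralSeries c) ⊓ commutator F) ⧸
            ((⁅R ⊔ (⊤ : Subgroup F).lowerCentralSeries c, (⊤ : Subgroup F)⁆).subgroupOf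
              ((R ⊔ (⊤ : Subgroup F).lowerCentralSeries c) ⊓ commutator F))))
    (hφ : ∀ (g : F) (h1 : g ∈ R ⊓ commutator F)
        (h2 : g ∈ (R ⊔ (⊤ : Subgroup F).lowerCentralSeries c) ⊓ commutator F),
        φ (QuotientGroup.mk ⟨g, h1⟩) = QuotientGroup.mk ⟨g, h2⟩) :
    φ.ker = Subgroup.map
        (QuotientGroup.mk' ((⁅R, (⊤ : Subgroup F)⁆).subgroupOf (R ⊓ commutator F)))
        ((R ⊓ (⁅R, (⊤ : Subgroup F)⁆ ⊔ (⊤ : Subgroup F).lowerCentralSeries (c + 1))).subgroupOf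
          (R ⊓ commutator F)) := by
  have hincl : R ⊓ commutator F ≤ (R ⊔ (⊤ : Subgroup F).lowerCentralSeries c) ⊓ commutator F :=
    inf_le_inf_right _ le_sup_left
  rw [Subgroup.ker_eq_map_subgroupOf_of_inclusion hincl φ hφ,
    Subgroup.commutator_sup_lowerCentralSeries_top]
  -- intersecting with `R` is harmless inside `R ∩ F'`
  congr 1
  rw [Subgroup.subgroupOf_inj, inf_assoc]
  exact (inf_eq_right.mpr (inf_le_right.trans inf_le_left)).symm
end

section
/- Let F be a group, R ⊴ F. Then (R ∩ F')·[Rγ_cF,F]/[Rγ_cF,F] = (Rγ_{c+1}F ∩ F')/[Rγ_cF,F], where F' = [F,F] and γ_cF is the lower central series. -/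
/-! Put `N = [Rγ_cF, F]`; it is normal and `γ_{c+1}F ≤ N ≤ F'`. Two subgroups have the same image
in `F/N` iff their products with `N` agree, and by the modular law for the normal subgroup `N`
both `(R ∩ F')N` and `(Rγ_{c+1}F ∩ F')N` equal `RN ∩ F'`. -/

namespace Subgroup

variable {G : Type*} [Group G]

theorem sup_inf_assoc_of_le_of_normal {N K : Subgroup G} [N.Normal] (H : Subgroup G)
    (hNK : N ≤ K) : (N ⊔ H) ⊓ K = N ⊔ H ⊓ K := by
  refine le_antisymm ?_ (sup_le (le_inf le_sup_left hNK) (inf_le_inf_right K le_sup_right))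
  intro x hx
  obtain ⟨hxNH, hxK⟩ := mem_inf.mp hx
  rw [← SetLike.mem_coe, normal_mul] at hxNH
  obtain ⟨n, hn, h, hh, rfl⟩ := hxNH
  have hhK : h ∈ K := by simpa using K.mul_mem (K.inv_mem (hNK hn)) hxK
  exact mul_mem (mem_sup_left hn) (mem_sup_right ⟨hh, hhK⟩)

theorem map_mk'_inf_eq_map_mk'_sup_inf {M N K : Subgroup G} [N.Normal] (H : Subgroup G)
    (hMN : M ≤ N) (hNK : N ≤ K) :
    (H ⊓ K).map (QuotientGroup.mk' N) = ((H ⊔ M) ⊓ K).map (QuotientGroup.mk' N) := by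
  rw [map_eq_map_iff, QuotientGroup.ker_mk', sup_comm, sup_comm _ N,
    ← sup_inf_assoc_of_le_of_normal _ hNK, ← sup_inf_assoc_of_le_of_normal _ hNK, ← sup_assoc,
    sup_right_comm, sup_of_le_left hMN]

end Subgroup

/-- `(R ∩ F')·[Rγ_cF,F]/[Rγ_cF,F] = (Rγ_{c+1}F ∩ F')/[Rγ_cF,F]`, as subgroups of
`F/[Rγ_cF,F]`. -/
theorem schur_stmt19 (F : Type) [Group F] (R : Subgroup F) [R.Normal] (c : ℕ) :
    (R ⊓ commutator F).map
        (QuotientGroup.mk' ⁅R ⊔ (⊤ : Subgroup F).lowerCentralSeries c, (⊤ : Subgroup F)⁆) =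
      ((R ⊔ (⊤ : Subgroup F).lowerCentralSeries (c + 1)) ⊓ commutator F).map
        (QuotientGroup.mk' ⁅R ⊔ (⊤ : Subgroup F).lowerCentralSeries c, (⊤ : Subgroup F)⁆) := by
  apply Subgroup.map_mk'_inf_eq_map_mk'_sup_inf
  · rw [Subgroup.lowerCentralSeries_succ]
    exact Subgroup.commutator_mono le_sup_right le_rfl
  · exact Subgroup.commutator_mono le_top le_top
end
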